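/- Let E and B be pointed CW complexes with basepoints e₀ and b₀, and let p : E → B be a pointed continuous map. Let F = P_p = {(e,ω) ∈ E × PB : ω(0) = p(e)} be the mapping path space of p, let f : P_p → E be the projection (e,ω) ↦ e, and let ∂ : ΩB → P_p be the connecting map ω ↦ (e₀, ω). If p has a left homotopy inverse, i.e. there is a pointed continuous map s : B → E with s∘p pointed-homotopic to the identity of E, then ∂ has a right homotopy inverse, i.e. there is a continuous map t : P_p → ΩB with ∂∘t homotopic to the identity of P_p. -/

import Mathlib

open Set

universe u v

noncomputable section

/-! ### Abstract simplicial complexes -/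

/-- `K` is an abstract simplicial complex (a collection of subsets containing `∅`
and closed under taking subsets). -/
def IsComplex {ι : Type*} (K : Set (Set ι)) : Prop :=
  ∅ ∈ K ∧ ∀ σ ∈ K, ∀ τ ⊆ σ, τ ∈ K

/-- `ω` is a missing face of `K`: not a face, but all proper subsets are faces. -/
def IsMissingFace {ι : Type*} (K : Set (Set ι)) (ω : Set ι) : Prop :=
  ω ∉ K ∧ ∀ τ ⊂ ω, τ ∈ K

/-- `K` is flag: every missing face has at most two elements. -/
def IsFlag {ι : Type*} (K : Set (Set ι)) : Prop :=
  ∀ ω, IsMissingFace K ω → ω.encard ≤ 2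

/-- The flagification of `K`: faces are the subsets all of whose
subsets with at most two elements belong to `K`. -/
def flagification {ι : Type*} (K : Set (Set ι)) : Set (Set ι) :=
  {σ | ∀ τ ⊆ σ, τ.encard ≤ 2 → τ ∈ K}

theorem subset_flagification {ι : Type*} {K : Set (Set ι)} (hK : IsComplex K) :
    K ⊆ flagification K := fun σ hσ τ hτ _ => hK.2 σ hσ τ hτ

/-- The star of a vertex. -/
def starOf {ι : Type*} (K : Set (Set ι)) (v : ι) : Set (Set ι) :=
  {τ | τ ∈ K ∧ insert v τ ∈ K}

/-- The deletion of a vertex. -/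
def delOf {ι : Type*} (K : Set (Set ι)) (v : ι) : Set (Set ι) :=
  {τ | τ ∈ K ∧ v ∉ τ}

/-- The link of a vertex. -/
def linkOf {ι : Type*} (K : Set (Set ι)) (v : ι) : Set (Set ι) :=
  starOf K v ∩ delOf K v

/-- The full subcomplex on a subset `ω` of the index set. -/
def fullSub {ι : Type*} (K : Set (Set ι)) (ω : Set ι) : Set (Set ι) :=
  {σ | σ ∈ K ∧ σ ⊆ ω}

/-- The vertex set of a complex. -/
def vertices {ι : Type*} (K : Set (Set ι)) : Set ι := {i | {i} ∈ K}

/-- The complex consisting of disjoint points: faces are `∅` and the singletons. -/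
def discreteComplex (ι : Type*) : Set (Set ι) := {σ | σ.Subsingleton}

theorem discreteComplex_subset {ι : Type*} {K : Set (Set ι)} (h0 : ∅ ∈ K)
    (hv : ∀ i : ι, ({i} : Set ι) ∈ K) : discreteComplex ι ⊆ K := by
  intro σ hσ
  rcases hσ.eq_empty_or_singleton with h | ⟨i, h⟩ <;> subst h
  · exact h0
  · exact hv _

theorem delOf_mono {ι : Type*} {K K' : Set (Set ι)} (h : K ⊆ K') (v : ι) :
    delOf K v ⊆ delOf K' v := fun τ hτ => ⟨h hτ.1, hτ.2⟩

theorem linkOf_mono {ι : Type*} {K K' : Set (Set ι)} (h : K ⊆ K') (v : ι) :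
    linkOf K v ⊆ linkOf K' v := fun τ hτ =>
  ⟨⟨h hτ.1.1, h hτ.1.2⟩, h hτ.2.1, hτ.2.2⟩

theorem vertices_linkOf_ne {ι : Type*} (K : Set (Set ι)) (v : ι) {i : ι}
    (h : i ∈ vertices (linkOf K v)) : i ≠ v := by
  rintro rfl
  exact h.2.2 (Set.mem_singleton _)


theorem linkOf_subset_delOf {ι : Type*} (K : Set (Set ι)) (v : ι) :
    linkOf K v ⊆ delOf K v := Set.inter_subset_right

theorem empty_mem_delOf {ι : Type*} {K : Set (Set ι)} {v : ι} (h0 : ∅ ∈ K) :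
    ∅ ∈ delOf K v := ⟨h0, Set.notMem_empty v⟩

theorem empty_mem_linkOf {ι : Type*} {K : Set (Set ι)} {v : ι} (h0 : ∅ ∈ K)
    (hv : ({v} : Set ι) ∈ K) : ∅ ∈ linkOf K v :=
  ⟨⟨h0, by simpa using hv⟩, h0, Set.notMem_empty v⟩

/-! ### Polyhedral products -/

/-- The polyhedral product of the pairs `(X i, A i)`, over the full index type. -/
def polyProd {ι : Type*} (X : ι → Type u) [∀ i, TopologicalSpace (X i)]
    (A : ∀ i, Set (X i)) (K : Set (Set ι)) : Set (∀ i, X i) :=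
  {x | ∃ σ ∈ K, ∀ i, i ∉ σ → x i ∈ A i}

/-- The polyhedral product of the pairs `(X i, A i)`, over the index set `S`. -/
def polyProdOn {ι : Type*} (X : ι → Type u) [∀ i, TopologicalSpace (X i)]
    (A : ∀ i, Set (X i)) (S : Set ι) (K : Set (Set ι)) : Set (∀ i : S, X i) :=
  {x | ∃ σ ∈ K, ∀ i : S, ↑i ∉ σ → x i ∈ A i}

theorem polyProd_mono {ι : Type*} (X : ι → Type u) [∀ i, TopologicalSpace (X i)]
    (A : ∀ i, Set (X i)) {K K' : Set (Set ι)} (h : K ⊆ K') :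
    polyProd X A K ⊆ polyProd X A K' := fun _ ⟨σ, hσ, hx⟩ => ⟨σ, h hσ, hx⟩

theorem polyProdOn_mono {ι : Type*} (X : ι → Type u) [∀ i, TopologicalSpace (X i)]
    (A : ∀ i, Set (X i)) (S : Set ι) {K K' : Set (Set ι)} (h : K ⊆ K') :
    polyProdOn X A S K ⊆ polyProdOn X A S K' := fun _ ⟨σ, hσ, hx⟩ => ⟨σ, h hσ, hx⟩

/-- The subspace inclusion of polyhedral products induced by an inclusion of
simplicial complexes. -/
def polyIncl {ι : Type*} (X : ι → Type u) [∀ i, TopologicalSpace (X i)]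
    (A : ∀ i, Set (X i)) {K K' : Set (Set ι)} (h : K ⊆ K') :
    C(↥(polyProd X A K), ↥(polyProd X A K')) :=
  ⟨Set.inclusion (polyProd_mono X A h), continuous_inclusion _⟩

/-- The subspace inclusion of polyhedral products over the index set `S` induced by an
inclusion of simplicial complexes. -/
def polyInclOn {ι : Type*} (X : ι → Type u) [∀ i, TopologicalSpace (X i)]
    (A : ∀ i, Set (X i)) (S : Set ι) {K K' : Set (Set ι)} (h : K ⊆ K') :
    C(↥(polyProdOn X A S K), ↥(polyProdOn X A S K')) :=
  ⟨Set.inclusion (polyProdOn_mono X A S h), continuous_inclusion _⟩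

/-- The basepoint of a polyhedral product. -/
def polyBase {ι : Type*} (X : ι → Type u) [∀ i, TopologicalSpace (X i)]
    (A : ∀ i, Set (X i)) (K : Set (Set ι)) (h0 : ∅ ∈ K)
    (pt : ∀ i, X i) (hpt : ∀ i, pt i ∈ A i) : ↥(polyProd X A K) :=
  ⟨pt, ∅, h0, fun i _ => hpt i⟩

/-- The basepoint of a polyhedral product over the index set `S`. -/
def polyBaseOn {ι : Type*} (X : ι → Type u) [∀ i, TopologicalSpace (X i)]
    (A : ∀ i, Set (X i)) (S : Set ι) (K : Set (Set ι)) (h0 : ∅ ∈ K)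
    (pt : ∀ i, X i) (hpt : ∀ i, pt i ∈ A i) : ↥(polyProdOn X A S K) :=
  ⟨fun i => pt i, ∅, h0, fun i _ => hpt i⟩

/-! ### Loop spaces, path spaces and mapping path spaces -/

/-- The loop space of `Z` at `z₀`, with the compact-open topology. -/
abbrev Loops (Z : Type u) [TopologicalSpace Z] (z₀ : Z) :=
  {ω : C(unitInterval, Z) // ω 0 = z₀ ∧ ω 1 = z₀}

/-- The constant loop. -/
def constLoop (Z : Type u) [TopologicalSpace Z] (z₀ : Z) : Loops Z z₀ :=
  ⟨ContinuousMap.const _ z₀, rfl, rfl⟩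

/-- The map of loop spaces induced by a pointed continuous map. -/
def loopMap {Y Z : Type u} [TopologicalSpace Y] [TopologicalSpace Z] {y₀ : Y} {z₀ : Z}
    (f : C(Y, Z)) (hf : f y₀ = z₀) : C(Loops Y y₀, Loops Z z₀) :=
  ⟨fun ω => ⟨f.comp ω.1, by simp [ω.2.1, hf], by simp [ω.2.2, hf]⟩,
    ((ContinuousMap.continuous_postcomp f).comp continuous_subtype_val).subtype_mk _⟩

/-- The path space `PZ` of paths ending at the basepoint. -/
abbrev PathSpc (Z : Type u) [TopologicalSpace Z] (z₀ : Z) :=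
  {ω : C(unitInterval, Z) // ω 1 = z₀}

/-- The mapping path space `P_g` of a pointed map `g`. -/
abbrev MapPath {Y Z : Type u} [TopologicalSpace Y] [TopologicalSpace Z]
    (g : C(Y, Z)) (z₀ : Z) :=
  {p : Y × C(unitInterval, Z) // p.2 0 = g p.1 ∧ p.2 1 = z₀}

/-- The basepoint of a mapping path space. -/
def mapPathBase {Y Z : Type u} [TopologicalSpace Y] [TopologicalSpace Z]
    (g : C(Y, Z)) {y₀ : Y} {z₀ : Z} (h : g y₀ = z₀) : MapPath g z₀ :=
  ⟨(y₀, ContinuousMap.const _ z₀), by simp [h], rfl⟩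

/-- Projection of the mapping path space to the source. -/
def mapPathProj {Y Z : Type u} [TopologicalSpace Y] [TopologicalSpace Z]
    (g : C(Y, Z)) (z₀ : Z) : C(MapPath g z₀, Y) :=
  ⟨fun p => p.1.1, (continuous_fst.comp continuous_subtype_val)⟩

/-- The fibre inclusion (connecting map) `ΩZ → P_g`. -/
def loopToMapPath {Y Z : Type u} [TopologicalSpace Y] [TopologicalSpace Z]
    (g : C(Y, Z)) {y₀ : Y} {z₀ : Z} (h : g y₀ = z₀) :
    C(Loops Z z₀, MapPath g z₀) :=
  ⟨fun ω => ⟨(y₀, ω.1), by simp [ω.2.1, h], ω.2.2⟩,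
    ((continuous_const.prodMk continuous_subtype_val)).subtype_mk _⟩

/-- Functoriality of mapping path spaces: a commutative square of pointed maps
induces a map of mapping path spaces. -/
def mapPathMap {Y Z Y' Z' : Type u} [TopologicalSpace Y] [TopologicalSpace Z]
    [TopologicalSpace Y'] [TopologicalSpace Z'] {g : C(Y, Z)} {g' : C(Y', Z')}
    (a : C(Y, Y')) (b : C(Z, Z')) {z₀ : Z} {z₀' : Z'} (hz : b z₀ = z₀')
    (hcomm : ∀ y, g' (a y) = b (g y)) : C(MapPath g z₀, MapPath g' z₀') :=
  ⟨fun p => ⟨(a p.1.1, b.comp p.1.2), by simp [hcomm, p.2.1], by simp [p.2.2, hz]⟩,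
    ((a.continuous.comp (continuous_fst.comp continuous_subtype_val)).prodMk
      ((ContinuousMap.continuous_postcomp b).comp
        (continuous_snd.comp continuous_subtype_val))).subtype_mk _⟩

/-- The induced map of path spaces. -/
def pathSpcMap {Y Z : Type u} [TopologicalSpace Y] [TopologicalSpace Z] {y₀ : Y} {z₀ : Z}
    (f : C(Y, Z)) (hf : f y₀ = z₀) : C(PathSpc Y y₀, PathSpc Z z₀) :=
  ⟨fun ω => ⟨f.comp ω.1, by rw [ContinuousMap.comp_apply, ω.2, hf]⟩,
    Continuous.subtype_mk ((ContinuousMap.continuous_postcomp f).comp continuous_subtype_val)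
      (fun ω => by simp only [Function.comp_apply, ContinuousMap.comp_apply, ω.2, hf])⟩

/-! ### Spaces of paths starting in a subspace -/

/-- For a subset `W` of (a subspace of) `Z`, the space of pairs `(y, ω)` with `y ∈ W`
and `ω` a path in `Z` starting at `y`. -/
def Ptil {Z : Type u} [TopologicalSpace Z] (W : Set Z) : Set (Z × C(unitInterval, Z)) :=
  {p | p.1 ∈ W ∧ p.2 0 = p.1}

/-- For a subset `W` of (a subspace of) `Z`, the space of pairs `(y, ω)` with `y ∈ W`
and `ω` a path in `Z` from `y` to the basepoint. -/
def Pms {Z : Type u} [TopologicalSpace Z] (z₀ : Z) (W : Set Z) : Set (Z × C(unitInterval, Z)) :=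
  {p | p.1 ∈ W ∧ p.2 0 = p.1 ∧ p.2 1 = z₀}

/-- The canonical map `P_{g × h} → P_g × P_h`. -/
def splitMapPath {Y Z M N : Type u} [TopologicalSpace Y] [TopologicalSpace Z]
    [TopologicalSpace M] [TopologicalSpace N] (g : C(Y, Z)) (h : C(M, N)) (z₀ : Z) (n₀ : N) :
    MapPath (g.prodMap h) (z₀, n₀) → MapPath g z₀ × MapPath h n₀ := fun p =>
  (⟨(p.1.1.1, ContinuousMap.fst.comp p.1.2), by simp [p.2.1], by simp [p.2.2]⟩,
   ⟨(p.1.1.2, ContinuousMap.snd.comp p.1.2), by simp [p.2.1], by simp [p.2.2]⟩)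

/-- The map `ψ : P_{id_Y} → PY`. -/
def psiIdPath {Y : Type u} [TopologicalSpace Y] (y₀ : Y) :
    MapPath (ContinuousMap.id Y) y₀ → PathSpc Y y₀ := fun p => ⟨p.1.2, p.2.2⟩

/-- The map `φ : PY → P_{id_Y}`. -/
def phiIdPath {Y : Type u} [TopologicalSpace Y] (y₀ : Y) :
    PathSpc Y y₀ → MapPath (ContinuousMap.id Y) y₀ := fun ω => ⟨(ω.1 0, ω.1), rfl, ω.2⟩

/-! ### Joins and cones -/

/-- The defining relations of the (reduced) join. -/
inductive JoinRel {Y Z : Type u} (y₀ : Y) (z₀ : Z) :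
    Y × unitInterval × Z → Y × unitInterval × Z → Prop
  | left (y : Y) (z z' : Z) : JoinRel y₀ z₀ (y, 0, z) (y, 0, z')
  | right (y y' : Y) (z : Z) : JoinRel y₀ z₀ (y, 1, z) (y', 1, z)
  | base (t : unitInterval) : JoinRel y₀ z₀ (y₀, t, z₀) (y₀, 0, z₀)

/-- The (reduced) join of two pointed spaces, with the quotient topology. -/
abbrev Join (Y Z : Type u) [TopologicalSpace Y] [TopologicalSpace Z] (y₀ : Y) (z₀ : Z) :=
  Quot (JoinRel y₀ z₀)

/-- The basepoint of the join. -/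
def joinBase (Y Z : Type u) [TopologicalSpace Y] [TopologicalSpace Z] (y₀ : Y) (z₀ : Z) :
    Join Y Z y₀ z₀ :=
  Quot.mk _ (y₀, 0, z₀)

/-- The defining relations of the (reduced) cone: the subset `Y×{0} ∪ {y₀}×I` is
collapsed to a point. -/
inductive ConeRel (Y : Type u) (y₀ : Y) : Y × unitInterval → Y × unitInterval → Prop
  | mk (p q : Y × unitInterval) (hp : p.2 = 0 ∨ p.1 = y₀) (hq : q.2 = 0 ∨ q.1 = y₀) :
      ConeRel Y y₀ p q

/-- The (reduced) cone on a pointed space, with the quotient topology. -/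
abbrev Cone (Y : Type u) [TopologicalSpace Y] (y₀ : Y) := Quot (ConeRel Y y₀)

/-- The basepoint (the collapsed class) of the cone. -/
def coneBase (Y : Type u) [TopologicalSpace Y] (y₀ : Y) : Cone Y y₀ :=
  Quot.mk _ (y₀, 0)

/-- The inclusion of `Y` in the cone as `Y × {1}`. -/
def coneIncl (Y : Type u) [TopologicalSpace Y] (y₀ : Y) : C(Y, Cone Y y₀) :=
  ⟨fun y => Quot.mk _ (y, 1),
    (continuous_quot_mk.comp (continuous_id.prodMk continuous_const))⟩

/-! ### CW complexes -/

section OldCWComplex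

open CategoryTheory CategoryTheory.Limits

namespace RelativeCWComplex

/-- The `n`-sphere (in `ℝⁿ⁺¹`), as in the older Mathlib. -/
def sphere (n : ℤ) : TopCat.{u} :=
  TopCat.of <| ULift <| Metric.sphere (0 : EuclideanSpace ℝ <| Fin <| Int.toNat <| n + 1) 1

/-- The `n`-dimensional closed disk, as in the older Mathlib. -/
def disk (n : ℤ) : TopCat.{u} :=
  TopCat.of <| ULift <| Metric.closedBall (0 : EuclideanSpace ℝ <| Fin <| Int.toNat n) 1

/-- The inclusion of the `n`-sphere in the `(n+1)`-disk. -/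
def sphereInclusion (n : ℤ) : sphere.{u} n ⟶ disk.{u} (n + 1) :=
  TopCat.ofHom ⟨fun x => ⟨⟨x.down.1, le_of_eq x.down.2⟩⟩,
    continuous_uliftUp.comp
      ((continuous_subtype_val.comp continuous_uliftDown).subtype_mk _)⟩

/-- Disjoint union of sphere inclusions. -/
def sigmaSphereInclusion (n : ℤ) (cells : Type u) :
    (∐ fun (_ : cells) => sphere.{u} n) ⟶ (∐ fun (_ : cells) => disk.{u} (n + 1)) :=
  Limits.Sigma.map fun _ => sphereInclusion n

/-- The combined attaching map. -/
def sigmaAttachMap (X : TopCat.{u}) (n : ℤ) (cells : Type u)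
    (attach_maps : cells → (sphere.{u} n ⟶ X)) : (∐ fun (_ : cells) => sphere.{u} n) ⟶ X :=
  Limits.Sigma.desc attach_maps

/-- `X'` is obtained from `X` by attaching `(n + 1)`-disks. -/
structure AttachCells (X X' : TopCat.{u}) (n : ℤ) where
  cells : Type u
  attach_maps : cells → (sphere.{u} n ⟶ X)
  iso_pushout : X' ≅ pushout (sigmaSphereInclusion n cells) (sigmaAttachMap X n cells attach_maps)

end RelativeCWComplex

/-- A relative CW complex (the older Mathlib notion). -/
structure RelativeCWComplex where
  sk : ℕ → TopCat.{u}
  attachCells (n : ℕ) : RelativeCWComplex.AttachCells (sk n) (sk (n + 1)) (n - 1)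

/-- A CW complex (the older Mathlib notion). -/
structure CWComplex extends RelativeCWComplex.{u} where
  isEmpty_sk_zero : IsEmpty (sk 0)

namespace RelativeCWComplex

/-- Inclusion `X ⟶ X'` for an attaching of cells. -/
def AttachCells.inclusion (X X' : TopCat.{u}) (n : ℤ) (att : AttachCells X X' n) : X ⟶ X' :=
  pushout.inr _ _ ≫ (att.iso_pushout).inv

/-- Skeleton inclusion. -/
def skInclusion (X : RelativeCWComplex.{u}) (n : ℕ) : X.sk n ⟶ X.sk (n + 1) :=
  AttachCells.inclusion (X.sk n) (X.sk (n + 1)) (n - 1) (X.attachCells n)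

/-- The underlying space of a relative CW complex. -/
def toTopCat (X : RelativeCWComplex.{u}) : TopCat.{u} :=
  colimit (Functor.ofSequence X.skInclusion)

end RelativeCWComplex

end OldCWComplex

/-- `X` is homeomorphic to (the geometric realization of) a CW complex. -/
def IsCW (X : Type u) [TopologicalSpace X] : Prop :=
  ∃ C : CWComplex.{u},
    Nonempty (X ≃ₜ ↥(RelativeCWComplex.toTopCat C.toRelativeCWComplex))

open CategoryTheory in
/-- `(X, A)` is (homeomorphic to) a CW pair: `A` is a CW complex and `X` is obtained
from `A` by attaching cells, i.e. `(X, A)` is a relative CW complex. -/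
def IsCWPair (X : Type u) [TopologicalSpace X] (A : Set X) : Prop :=
  IsCW (↥A) ∧
  ∃ (R : RelativeCWComplex.{u}) (e : X ≃ₜ ↥(RelativeCWComplex.toTopCat R)),
    (e '' A) =
      Set.range ⇑(Limits.colimit.ι (Functor.ofSequence R.skInclusion) 0)

/-! ### Graphs -/

/-- The 1-skeleton of a simplicial complex, as a simple graph. -/
def oneSkeleton {ι : Type*} (K : Set (Set ι)) : SimpleGraph ι where
  Adj i j := i ≠ j ∧ ({i, j} : Set ι) ∈ K
  symm := by
    constructor
    rintro i j ⟨hne, h⟩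
    exact ⟨hne.symm, by rwa [Set.pair_comm]⟩
  loopless := by constructor; rintro i ⟨hne, -⟩; exact hne rfl

/-- A simple graph is chordal iff it has no induced cycles of length at least 4. -/
def Chordal {V : Type*} (G : SimpleGraph V) : Prop :=
  ∀ n, 4 ≤ n → IsEmpty (SimpleGraph.cycleGraph n ↪g G)

/-!
A contraction `γ` of the projection `P_p → E`, i.e. paths `γ_q` from `e` to `e₀` depending
continuously on `q = (e, ω)`, yields the loop `t q = (p ∘ γ_q)⁻¹ · ω` at `b₀ = p e₀`. Sliding
the starting point of this loop back along `p ∘ γ_q`, while the point of `E` moves along `γ_q`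
from `e₀` to `e`, deforms `∂ (t q)` into `q`. A left homotopy inverse `s` provides the contraction:
`e` is joined to `s (p e)` by the homotopy `s ∘ p ≃ id`, and `s ∘ ω` joins `s (p e)` to `s b₀ = e₀`.
-/

open unitInterval

def unitInterval.half : I := ⟨1 / 2, by norm_num, by norm_num⟩

namespace Path

variable {X : Type*} [TopologicalSpace X] {x y z : X}

lemma trans_apply_convexComb_zero_half (γ : Path x y) (γ' : Path y z) (t : I) :
    γ.trans γ' (Icc.convexComb 0 half t) = γ t := by
  have hc : (Icc.convexComb 0 half t : ℝ) = t / 2 := by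
    simp only [Icc.coe_convexComb, Icc.coe_zero, half]
    ring
  rw [trans_apply, dif_pos (by rw [hc]; linarith [t.2.2])]
  congr 1
  ext
  simp only [hc]
  ring

lemma trans_apply_convexComb_half_one (γ : Path x y) (γ' : Path y z) (t : I) :
    γ.trans γ' (Icc.convexComb half 1 t) = γ' t := by
  have hc : (Icc.convexComb half 1 t : ℝ) = (1 + t) / 2 := by
    simp only [Icc.coe_convexComb, Icc.coe_one, half]
    ring
  rw [trans_apply]
  split_ifs with h
  · have ht : t = 0 := Subtype.ext <| by
      rw [hc] at h
      simp only [Icc.coe_zero]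
      linarith [t.2.1]
    simp [ht, half]
  · congr 1
    ext
    simp only [hc]
    ring

theorem continuous_uncurry_subpath {ι : Type*} [TopologicalSpace ι] {a b : ι → X}
    (γ : ∀ i, Path (a i) (b i)) (hγ : Continuous ↿γ) {t₀ t₁ : ι → I} (h₀ : Continuous t₀)
    (h₁ : Continuous t₁) : Continuous ↿fun i => (γ i).subpath (t₀ i) (t₁ i) :=
  hγ.comp <| continuous_fst.prodMk <| Icc.continuous_convexComb_prod.comp <|
    (h₀.comp continuous_fst).prodMk <| (h₁.comp continuous_fst).prodMk continuous_snd

end Path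

namespace MapPath

variable {E B : Type u} [TopologicalSpace E] [TopologicalSpace B] {p : C(E, B)} {b₀ : B}

def path (q : MapPath p b₀) : Path (p q.1.1) b₀ := ⟨q.1.2, q.2.1, q.2.2⟩

def mk (e : E) (γ : Path (p e) b₀) : MapPath p b₀ := ⟨(e, γ), γ.source, γ.target⟩

@[simp]
lemma mk_val (e : E) (γ : Path (p e) b₀) : (mk e γ).1 = (e, γ.toContinuousMap) := rfl

lemma continuous_mk {X : Type*} [TopologicalSpace X] {e : X → E} (he : Continuous e)
    {γ : ∀ x, Path (p (e x)) b₀} (hγ : Continuous ↿γ) :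
    Continuous fun x => mk (e x) (γ x) :=
  (he.prodMk (ContinuousMap.continuous_of_continuous_uncurry _ hγ)).subtype_mk _

variable {e₀ : E}

variable (p b₀) in
theorem comp_mapPathProj_homotopic_const :
    (p.comp (mapPathProj p b₀)).Homotopic (.const _ b₀) :=
  ⟨{ toFun := fun x => x.2.path x.1
     continuous_toFun := continuous_eval.comp
       ((continuous_snd.comp (continuous_subtype_val.comp continuous_snd)).prodMk continuous_fst)
     map_zero_left := fun q => q.2.1
     map_one_left := fun q => q.2.2 }⟩

theorem mapPathProj_homotopic_const {s : C(B, E)} (hs : s b₀ = e₀)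
    (hsp : (s.comp p).Homotopic (.id E)) :
    (mapPathProj p b₀).Homotopic (.const _ e₀) := by
  have := (hsp.symm.comp (.refl (mapPathProj p b₀))).trans
    ((ContinuousMap.Homotopic.refl s).comp (comp_mapPathProj_homotopic_const p b₀))
  simpa [ContinuousMap.comp_const, hs] using this

variable (F : (mapPathProj p b₀).Homotopy (.const _ e₀))

def contractionLoop (q : MapPath p b₀) : Path (p e₀) b₀ :=
  ((F.evalAt q).map p.continuous).symm.trans q.path

lemma continuous_contractionLoop :
    Continuous fun x : MapPath p b₀ × I => contractionLoop F x.1 x.2 := by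
  refine Path.trans_continuous_family (fun q => ((F.evalAt q).map p.continuous).symm) ?_
    (fun q => q.path) ?_
  · exact p.continuous.comp <| F.continuous.comp <|
      (continuous_symm.comp continuous_snd).prodMk continuous_fst
  · exact continuous_eval.comp
      ((continuous_snd.comp (continuous_subtype_val.comp continuous_fst)).prodMk continuous_snd)

lemma contractionLoop_apply_convexComb_zero_half (q : MapPath p b₀) (t : I) :
    contractionLoop F q (Icc.convexComb 0 half t) = p (F (σ t, q)) :=
  Path.trans_apply_convexComb_zero_half _ _ t

lemma contractionLoop_apply_convexComb_half_one (q : MapPath p b₀) (t : I) :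
    contractionLoop F q (Icc.convexComb half 1 t) = q.path t :=
  Path.trans_apply_convexComb_half_one _ _ t

variable (hp : p e₀ = b₀)

def loopOfContraction : C(MapPath p b₀, Loops B b₀) where
  toFun q := ⟨contractionLoop F q, by simp [hp], by simp⟩
  continuous_toFun := (ContinuousMap.continuous_of_continuous_uncurry _
    (continuous_contractionLoop F)).subtype_mk _

theorem loopToMapPath_comp_loopOfContraction_homotopic_id :
    ((loopToMapPath p hp).comp (loopOfContraction F hp)).Homotopic (.id _) :=
  -- at time `w`: the point `F (1 - w, q)`, and the loop `t q` from time `w / 2` on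
  ⟨{ toFun := fun x => mk (F (σ x.1, x.2))
      (((contractionLoop F x.2).subpath (Icc.convexComb 0 half x.1) 1).cast
        (contractionLoop_apply_convexComb_zero_half F x.2 x.1).symm (by simp))
     continuous_toFun := by
      refine continuous_mk (F.continuous.comp ?_) ?_
      · fun_prop
      · exact Path.continuous_uncurry_subpath
          (fun x : I × MapPath p b₀ => contractionLoop F x.2)
          ((continuous_contractionLoop F).comp (f := fun x : (I × MapPath p b₀) × I =>
            (x.1.2, x.2)) (by fun_prop))
          ((Icc.continuous_convexComb 0 half).comp continuous_fst) continuous_const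
     map_zero_left := fun q => by
      refine Subtype.ext (Prod.ext ?_ (ContinuousMap.ext fun t => ?_))
      · exact congrArg (fun w => F (w, q)) symm_zero |>.trans (F.apply_one q)
      · simp only [mk_val, Path.coe_toContinuousMap, Path.cast_coe]
        rw [Icc.convexComb_zero, Path.subpath_zero_one]
        rfl
     map_one_left := fun q => by
      refine Subtype.ext (Prod.ext ?_ (ContinuousMap.ext fun t => ?_))
      · exact congrArg (fun w => F (w, q)) symm_one |>.trans (F.apply_zero q)
      · simp only [mk_val, Path.coe_toContinuousMap, Path.cast_coe]
        rw [Icc.convexComb_one]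
        exact contractionLoop_apply_convexComb_half_one F q t }⟩

end MapPath

theorem statement_10_general {E B : Type u} [TopologicalSpace E] [TopologicalSpace B]
    (e₀ : E) (b₀ : B)
    (p : C(E, B)) (hp : p e₀ = b₀)
    (hleft : ∃ s : C(B, E), s b₀ = e₀ ∧
      (s.comp p).HomotopicRel (ContinuousMap.id E) {e₀}) :
    ∃ t : C(MapPath p b₀, Loops B b₀),
      ((loopToMapPath (y₀ := e₀) p hp).comp t).Homotopic (ContinuousMap.id _) := by
  obtain ⟨s, hs, hsp⟩ := hleft
  obtain ⟨F⟩ := MapPath.mapPathProj_homotopic_const hs hsp.homotopic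
  exact ⟨MapPath.loopOfContraction F hp,
    MapPath.loopToMapPath_comp_loopOfContraction_homotopic_id F hp⟩

/-- If a pointed map `p : E → B` of pointed CW complexes has a left
homotopy inverse, then the connecting map `∂ : ΩB → P_p` has a right homotopy
inverse. -/
theorem statement_10 {E B : Type u} [TopologicalSpace E] [TopologicalSpace B]
    (e₀ : E) (b₀ : B) (hE : IsCW E) (hB : IsCW B)
    (p : C(E, B)) (hp : p e₀ = b₀)
    (hleft : ∃ s : C(B, E), s b₀ = e₀ ∧
      (s.comp p).HomotopicRel (ContinuousMap.id E) {e₀}) :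
    ∃ t : C(MapPath p b₀, Loops B b₀),
      ((loopToMapPath (y₀ := e₀) p hp).comp t).Homotopic (ContinuousMap.id _) :=
  statement_10_general e₀ b₀ p hp hleft

end
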